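/- Let K be an accessible category with directed colimits. If K is λ-accessible then K is μ-accessible for every regular cardinal μ ≥ λ. -/

import Mathlib

open CategoryTheory Limits Opposite

universe u u₂ u₃

/-- A preorder is `κ`-directed if every subset of cardinality `< κ` has an upper bound. -/
def IsCardDirected (κ : Cardinal.{u}) (J : Type u) [Preorder J] : Prop :=
  ∀ S : Set J, Cardinal.mk S < κ → ∃ b, ∀ a ∈ S, a ≤ b

/-- An object `K` is `κ`-presentable if its hom-functor preserves `κ`-directed colimits. -/
def IsPresentable (κ : Cardinal.{u}) {C : Type u₂} [Category.{u} C] (K : C) : Prop :=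
  ∀ (J : Type u) [Preorder J], IsCardDirected κ J →
    Nonempty (PreservesColimitsOfShape J (coyoneda.obj (op K)))

/-- A category has (all) directed colimits. -/
def HasDirectedColimits (C : Type u₂) [Category.{u} C] : Prop :=
  ∀ (J : Type u) [Preorder J], IsCardDirected Cardinal.aleph0 J → HasColimitsOfShape J C

/-- A presentation of `X` as a `κ`-directed colimit of objects from `S`. -/
structure DirectedColimitPresentation (κ : Cardinal.{u}) {C : Type u₂} [Category.{u} C]
    (S : Set C) (X : C) where
  J : Type u
  [inst : Preorder J]
  directed : IsCardDirected κ J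
  D : J ⥤ C
  mem : ∀ j, D.obj j ∈ S
  cocone : Cocone D
  isColimit : IsColimit cocone
  iso : cocone.pt ≅ X

attribute [instance] DirectedColimitPresentation.inst

/-- `C` is a `κ`-accessible category. -/
structure IsAccessible (κ : Cardinal.{u}) (C : Type u₂) [Category.{u} C] : Prop where
  hasColimits : ∀ (J : Type u) [Preorder J], IsCardDirected κ J → HasColimitsOfShape J C
  generators : ∃ S : Set C, (∀ A ∈ S, IsPresentable κ A) ∧
    ∀ X : C, Nonempty (DirectedColimitPresentation κ S X)

/-- A functor preserves (all) directed colimits. -/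
def PreservesDirectedColimits {C : Type u₂} [Category.{u} C] {D : Type u₃} [Category.{u} D]
    (F : C ⥤ D) : Prop :=
  ∀ (J : Type u) [Preorder J], IsCardDirected Cardinal.aleph0 J →
    Nonempty (PreservesColimitsOfShape J F)

/-- Coherence of a concrete structure functor `U`. -/
def Coherent {C : Type u₂} [Category.{u} C] (U : C ⥤ Type u) : Prop :=
  ∀ {A B Z : C} (h : A ⟶ Z) (g : B ⟶ Z) (f : U.obj A → U.obj B),
    U.map g ∘ f = U.map h → ∃ fbar : A ⟶ B, U.map fbar = f

/-- Equivalence of types `(f₀,a₀)` and `(f₁,a₁)` over `M`. -/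
def TypesEquiv {C : Type u₂} [Category.{u} C] (U : C ⥤ Type u) {M N₀ N₁ : C}
    (f₀ : M ⟶ N₀) (a₀ : U.obj N₀) (f₁ : M ⟶ N₁) (a₁ : U.obj N₁) : Prop :=
  ∃ (N : C) (h₀ : N₀ ⟶ N) (h₁ : N₁ ⟶ N),
    f₀ ≫ h₀ = f₁ ≫ h₁ ∧ U.map h₀ a₀ = U.map h₁ a₁

/-- The amalgamation property. -/
def AmalgamationProperty (C : Type u₂) [Category.{u} C] : Prop :=
  ∀ {K L M : C} (f : K ⟶ L) (g : K ⟶ M),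
    ∃ (N : C) (u : L ⟶ N) (v : M ⟶ N), f ≫ u = g ≫ v

/-- The joint embedding property. -/
def JointEmbeddingProperty (C : Type u₂) [Category.{u} C] : Prop :=
  ∀ K L : C, ∃ (N : C) (_ : K ⟶ N) (_ : L ⟶ N), True

/-- `L` is `λ`-saturated: injective w.r.t. morphisms between `λ`-presentable objects. -/
def IsSaturated (κ : Cardinal.{u}) {C : Type u₂} [Category.{u} C] (L : C) : Prop :=
  ∀ {A B : C}, IsPresentable κ A → IsPresentable κ B →
    ∀ (f : A ⟶ L) (g : A ⟶ B), ∃ h : B ⟶ L, g ≫ h = f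

/-- `K` has size `c`: its presentability rank is the successor cardinal `c⁺`. -/
def SizeIs (c : Cardinal.{u}) {C : Type u₂} [Category.{u} C] (K : C) : Prop :=
  IsPresentable (Order.succ c) K ∧ ∀ κ, Cardinal.IsRegular κ → κ ≤ c → ¬ IsPresentable κ K


/-!
Write `X` as a `λ`-directed colimit of `λ`-presentable objects `D j`, `j ∈ J`. The directed
subsets `M ⊆ J` of cardinality `< μ` form a `μ`-directed poset: a union of fewer than `μ` of them
is small, and closing it under upper bounds of pairs keeps it small. `X` is the colimit over this
poset of the objects `colim_{j ∈ M} D j`, which exist because all directed colimits do, and which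
are `μ`-presentable as colimits of fewer than `μ` objects that are `μ`-presentable. Without all
directed colimits one would have to use `λ`-directed subsets, and their closure needs `λ ⊴ μ`.
-/

open Cardinal

section Directed

variable {J : Type u} [Preorder J] {κ κ' : Cardinal.{u}}

lemma IsCardDirected.mono (h : κ' ≤ κ) (hJ : IsCardDirected κ J) : IsCardDirected κ' J :=
  fun S hS => hJ S (hS.trans_le h)

lemma IsGreatest.isCardDirected {M : Set J} {b : J} (hb : IsGreatest M b) :
    IsCardDirected κ M :=
  fun _ _ => ⟨⟨b, hb.1⟩, fun a _ => hb.2 a.2⟩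

lemma isCardDirected_aleph0_iff :
    IsCardDirected ℵ₀ J ↔ Nonempty J ∧ IsDirected J (· ≤ ·) := by
  constructor
  · intro h
    obtain ⟨b, -⟩ := h ∅ (by simpa using aleph0_pos)
    refine ⟨⟨b⟩, ⟨fun a b => ?_⟩⟩
    obtain ⟨c, hc⟩ := h {a, b} (Set.toFinite _).lt_aleph0
    exact ⟨c, hc a (by simp), hc b (by simp)⟩
  · rintro ⟨_, _⟩ S hS
    exact (lt_aleph0_iff_set_finite.mp hS).bddAbove

lemma isCardDirected_iff_isCardinalFiltered [Fact κ.IsRegular] :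
    IsCardDirected κ J ↔ IsCardinalFiltered J κ := by
  constructor
  · intro h
    refine isCardinalFiltered_preorder J κ fun K s hK => ?_
    obtain ⟨b, hb⟩ := h (Set.range s) (mk_range_le.trans_lt hK)
    exact ⟨b, fun k => hb _ ⟨k, rfl⟩⟩
  · intro _ S hS
    have hS' : HasCardinalLT S κ := (hasCardinalLT_iff_cardinal_mk_lt _ _).2 hS
    exact ⟨IsCardinalFiltered.max Subtype.val hS',
      fun a ha => leOfHom (IsCardinalFiltered.toMax Subtype.val hS' ⟨a, ha⟩)⟩

end Directed

section Presentable

variable {C : Type u₂} [Category.{u} C] {κ κ' : Cardinal.{u}}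

lemma IsPresentable.mono {X : C} (h : κ ≤ κ') (hX : IsPresentable κ X) : IsPresentable κ' X :=
  fun J _ hJ => hX J (hJ.mono h)

lemma isPresentable_iff_isCardinalPresentable [Fact κ.IsRegular] (X : C) :
    IsPresentable κ X ↔ IsCardinalPresentable X κ := by
  constructor
  · intro h
    refine ⟨fun J _ _ => ?_⟩
    obtain ⟨α, _, hα, F, _⟩ := IsCardinalFiltered.exists_cardinal_directed J κ
    have := (h α (isCardDirected_iff_isCardinalFiltered.2 hα)).some
    exact Functor.Final.preservesColimitsOfShape_of_final F _
  · intro _ J _ hJ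
    have := isCardDirected_iff_isCardinalFiltered.1 hJ
    exact ⟨preservesColimitsOfShape_of_isCardinalPresentable X κ J⟩

lemma hasCardinalLT_arrow_of_preorder {I : Type u} [Preorder I] (hκ : ℵ₀ ≤ κ)
    (hI : HasCardinalLT I κ) : HasCardinalLT (Arrow I) κ :=
  (hasCardinalLT_prod hκ hI hI).of_injective (fun f => (f.left, f.right)) fun f g h => by
    simp only [Prod.mk.injEq] at h
    exact Arrow.ext h.1 h.2 (Subsingleton.elim _ _)

lemma isPresentable_colimit_of_mk_lt [Fact κ.IsRegular] {I : Type u} [Preorder I]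
    (hI : #I < κ) (G : I ⥤ C) [HasColimit G] (hG : ∀ m, IsPresentable κ (G.obj m)) :
    IsPresentable κ (colimit G) := by
  have := fun m => (isPresentable_iff_isCardinalPresentable (G.obj m)).1 (hG m)
  exact (isPresentable_iff_isCardinalPresentable _).2 <|
    isCardinalPresentable_of_isColimit _ (colimit.isColimit G) κ <|
      hasCardinalLT_arrow_of_preorder (Fact.out : κ.IsRegular).aleph0_le
        ((hasCardinalLT_iff_cardinal_mk_lt _ _).2 hI)

end Presentable

section DirectedSubsets

variable {J : Type u} [Preorder J]

-- The witness is the closure of `A` under a chosen upper bound of each pair.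
lemma exists_directed_superset_mk_le [IsDirected J (· ≤ ·)] (A : Set J) (hA : ℵ₀ ≤ #A) :
    ∃ M : Set J, A ⊆ M ∧ IsDirected M (· ≤ ·) ∧ #M ≤ #A := by
  choose ub hub using fun a b : J => directed_of (· ≤ ·) a b
  let step : Set J → Set J := fun S => S ∪ Set.image2 ub S S
  let seq : ℕ → Set J := fun n => step^[n] A
  have hseq_succ : ∀ n, seq (n + 1) = step (seq n) := fun n => Function.iterate_succ_apply' ..
  have hmono : Monotone seq :=
    monotone_nat_of_le_succ fun n => (hseq_succ n).symm ▸ Set.subset_union_left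
  have hcard : ∀ n, #(seq n) ≤ #A := by
    intro n
    induction n with
    | zero => exact le_rfl
    | succ n ih =>
      have hinf : ℵ₀ ≤ #(seq n) := hA.trans (mk_le_mk_of_subset (hmono n.zero_le))
      calc #(seq (n + 1)) ≤ #(seq n) + #(seq n) * #(seq n) := by
            rw [hseq_succ]; exact (mk_union_le _ _).trans (add_le_add_right mk_image2_le _)
        _ = #(seq n) := by rw [mul_eq_self hinf, add_eq_self hinf]
        _ ≤ #A := ih
  refine ⟨⋃ n, seq n, Set.subset_iUnion seq 0, ⟨?_⟩, ?_⟩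
  · rintro ⟨a, ha⟩ ⟨b, hb⟩
    obtain ⟨m, ham⟩ := Set.mem_iUnion.1 ha
    obtain ⟨n, hbn⟩ := Set.mem_iUnion.1 hb
    refine ⟨⟨ub a b, Set.mem_iUnion.2 ⟨max m n + 1, ?_⟩⟩, hub a b⟩
    rw [hseq_succ]
    exact Or.inr (Set.mem_image2_of_mem (hmono (le_max_left m n) ham)
      (hmono (le_max_right m n) hbn))
  · have := mk_iUnion_le_lift seq
    simp only [lift_uzero, mk_nat, lift_aleph0] at this
    calc #(⋃ n, seq n) ≤ ℵ₀ * ⨆ n, #(seq n) := this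
      _ ≤ #A * #A := mul_le_mul' hA (ciSup_le' hcard)
      _ = #A := mul_eq_self hA

lemma exists_isCardDirected_superset (hJ : IsCardDirected ℵ₀ J) {μ : Cardinal.{u}}
    (hμ : ℵ₀ ≤ μ) (A : Set J) (hA : #A < μ) :
    ∃ M : Set J, A ⊆ M ∧ IsCardDirected ℵ₀ M ∧ #M < μ := by
  obtain ⟨-, _⟩ := isCardDirected_aleph0_iff.1 hJ
  rcases lt_or_ge #A ℵ₀ with hfin | hinf
  · obtain ⟨b, hb⟩ := hJ A hfin
    refine ⟨insert b A, Set.subset_insert b A,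
      IsGreatest.isCardDirected ⟨Set.mem_insert b A, ?_⟩,
      ((lt_aleph0_iff_set_finite.1 hfin).insert b).lt_aleph0.trans_le hμ⟩
    rintro a (rfl | ha)
    exacts [le_rfl, hb a ha]
  · obtain ⟨M, hAM, hM, hMA⟩ := exists_directed_superset_mk_le A hinf
    obtain ⟨a, ha⟩ := (infinite_iff.2 hinf).nonempty
    exact ⟨M, hAM, isCardDirected_aleph0_iff.2 ⟨⟨⟨a, hAM ha⟩⟩, hM⟩, hMA.trans_lt hA⟩

abbrev SmallDirectedSubset (μ : Cardinal.{u}) (J : Type u) [Preorder J] : Type u :=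
  {M : Set J // IsCardDirected ℵ₀ M ∧ #M < μ}

lemma isCardDirected_smallDirectedSubset {μ : Cardinal.{u}} [Fact μ.IsRegular]
    (hJ : IsCardDirected ℵ₀ J) : IsCardDirected μ (SmallDirectedSubset μ J) := by
  intro 𝒮 h𝒮
  have hU : #(⋃ M : 𝒮, M.1.1) < μ := by
    simp only [← hasCardinalLT_iff_cardinal_mk_lt] at h𝒮 ⊢
    exact hasCardinalLT_iUnion _ h𝒮 fun M => (hasCardinalLT_iff_cardinal_mk_lt _ _).2 M.1.2.2
  obtain ⟨N, hUN, hN, hNμ⟩ :=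
    exists_isCardDirected_superset hJ (Fact.out : μ.IsRegular).aleph0_le _ hU
  exact ⟨⟨N, hN, hNμ⟩, fun M hM => (Set.subset_iUnion (fun M : 𝒮 => M.1.1) ⟨M, hM⟩).trans hUN⟩

end DirectedSubsets

lemma OrderHom.mem_of_le {P α : Type*} [Preorder P] (s : P →o Set α) {p q : P} (h : p ≤ q)
    {a : α} (ha : a ∈ s p) : a ∈ s q :=
  s.mono h ha

section RestrictedColimit

variable {C : Type u₂} [Category.{u} C] {J : Type u} [Preorder J]

abbrev CategoryTheory.Functor.restrictSet (D : J ⥤ C) (S : Set J) : S ⥤ C where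
  obj j := D.obj j
  map f := D.map (homOfLE (leOfHom f))
  map_id j := D.map_id j.1
  map_comp _ _ := D.map_comp _ _

variable (D : J ⥤ C) {P : Type u} [Preorder P] (s : P →o Set J)
  [∀ p, HasColimit (D.restrictSet (s p))]

noncomputable def restrictedColimitMap {p q : P} (h : p ≤ q) :
    colimit (D.restrictSet (s p)) ⟶ colimit (D.restrictSet (s q)) :=
  colimit.desc _
    { pt := _
      ι :=
        { app j := colimit.ι (D.restrictSet (s q)) ⟨j.1, s.mem_of_le h j.2⟩
          naturality j j' f := (colimit.w (D.restrictSet (s q))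
            (homOfLE (leOfHom f) :
              ⟨j.1, s.mem_of_le h j.2⟩ ⟶ ⟨j'.1, s.mem_of_le h j'.2⟩)).trans
              (Category.comp_id _).symm } }

lemma ι_restrictedColimitMap {p q : P} (h : p ≤ q) (j : s p) :
    colimit.ι (D.restrictSet (s p)) j ≫ restrictedColimitMap D s h =
      colimit.ι (D.restrictSet (s q)) ⟨j.1, s.mem_of_le h j.2⟩ := by
  unfold restrictedColimitMap
  exact colimit.ι_desc _ _

noncomputable abbrev restrictedColimit : P ⥤ C where
  obj p := colimit (D.restrictSet (s p))
  map f := restrictedColimitMap D s (leOfHom f)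
  map_id p := colimit.hom_ext fun j => by
    rw [ι_restrictedColimitMap, Category.comp_id]
  map_comp f g := colimit.hom_ext fun j => by
    rw [ι_restrictedColimitMap, ← Category.assoc, ι_restrictedColimitMap, ι_restrictedColimitMap]

lemma ι_restrictedColimit_map {p q : P} (f : p ⟶ q) (j : s p) :
    colimit.ι (D.restrictSet (s p)) j ≫ (restrictedColimit D s).map f =
      colimit.ι (D.restrictSet (s q)) ⟨j.1, s.mem_of_le (leOfHom f) j.2⟩ :=
  ι_restrictedColimitMap D s (leOfHom f) j

variable {D}

noncomputable abbrev restrictedColimitCocone (c : Cocone D) : Cocone (restrictedColimit D s) where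
  pt := c.pt
  ι :=
    { app p := colimit.desc (D.restrictSet (s p))
        { pt := c.pt
          ι :=
            { app j := c.ι.app j
              naturality j j' f := (c.w _).trans (Category.comp_id _).symm } }
      naturality p q f := colimit.hom_ext fun j => by
        simp only [Functor.const_obj_obj, Functor.const_obj_map, Category.comp_id]
        rw [← Category.assoc, ι_restrictedColimitMap, colimit.ι_desc, colimit.ι_desc] }

lemma ι_restrictedColimitCocone_app (c : Cocone D) (p : P) (j : s p) :
    colimit.ι (D.restrictSet (s p)) j ≫ (restrictedColimitCocone s c).ι.app p =
      c.ι.app j := by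
  unfold restrictedColimitCocone
  exact colimit.ι_desc _ _

variable [IsDirected P (· ≤ ·)]

lemma ι_comp_app_eq_of_mem (t : Cocone (restrictedColimit D s)) {p q : P} {j : J}
    (hp : j ∈ s p) (hq : j ∈ s q) :
    colimit.ι (D.restrictSet (s p)) ⟨j, hp⟩ ≫ t.ι.app p =
      colimit.ι (D.restrictSet (s q)) ⟨j, hq⟩ ≫ t.ι.app q := by
  have h_le : ∀ {p r : P} (h : p ≤ r) (hp : j ∈ s p),
      colimit.ι (D.restrictSet (s p)) ⟨j, hp⟩ ≫ t.ι.app p =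
        colimit.ι (D.restrictSet (s r)) ⟨j, s.mem_of_le h hp⟩ ≫ t.ι.app r := by
    intro p r h hp
    rw [← t.w (homOfLE h), ← Category.assoc, ι_restrictedColimit_map]
  obtain ⟨r, hpr, hqr⟩ := directed_of (· ≤ ·) p q
  rw [h_le hpr, h_le hqr]

variable (hs : ∀ j, ∃ p, j ∈ s p)
include hs

-- The leg at `j` goes through a chosen `s p ∋ j`; by `ι_comp_app_eq_of_mem` any other choice
-- gives the same leg.
noncomputable abbrev coconeOfRestrictedColimitCocone (t : Cocone (restrictedColimit D s)) :
    Cocone D where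
  pt := t.pt
  ι :=
    { app j := colimit.ι (D.restrictSet (s (hs j).choose)) ⟨j, (hs j).choose_spec⟩ ≫
        t.ι.app (hs j).choose
      naturality j j' f := by
        obtain ⟨r, hjr, hj'r⟩ := directed_of (· ≤ ·) (hs j).choose (hs j').choose
        have hj := s.mem_of_le hjr (hs j).choose_spec
        have hj' := s.mem_of_le hj'r (hs j').choose_spec
        have hw := colimit.w (D.restrictSet (s r))
          (homOfLE (leOfHom f) : (⟨j, hj⟩ : s r) ⟶ ⟨j', hj'⟩)
        simp only [Functor.const_obj_obj, Functor.const_obj_map, Category.comp_id]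
        rw [ι_comp_app_eq_of_mem s t _ hj, ι_comp_app_eq_of_mem s t _ hj', ← Category.assoc]
        exact congrArg (· ≫ t.ι.app r) hw }

noncomputable def isColimitRestrictedColimitCocone {c : Cocone D} (hc : IsColimit c) :
    IsColimit (restrictedColimitCocone s c) where
  desc t := hc.desc (coconeOfRestrictedColimitCocone s hs t)
  fac t p := colimit.hom_ext fun j => by
    rw [← Category.assoc, ι_restrictedColimitCocone_app, hc.fac]
    exact ι_comp_app_eq_of_mem s t _ _
  uniq t m hm := hc.hom_ext fun j => by
    rw [hc.fac, ← ι_restrictedColimitCocone_app s c _ ⟨j, (hs j).choose_spec⟩,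
      Category.assoc, hm]

end RestrictedColimit

-- Reindexes a presentation of `X` by the small directed subsets of its index preorder.
noncomputable def DirectedColimitPresentation.regroup {C : Type u₂} [Category.{u} C]
    {κ μ : Cardinal.{u}} [Fact μ.IsRegular] (hκ : ℵ₀ ≤ κ) (hC : HasDirectedColimits C)
    {S : Set C} (hS : ∀ A ∈ S, IsPresentable μ A) {X : C}
    (p : DirectedColimitPresentation κ S X) :
    DirectedColimitPresentation μ {A | IsPresentable μ A} X := by
  have hJ : IsCardDirected ℵ₀ p.J := p.directed.mono hκ
  have hP : IsCardDirected μ (SmallDirectedSubset μ p.J) := isCardDirected_smallDirectedSubset hJ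
  have : IsDirected (SmallDirectedSubset μ p.J) (· ≤ ·) :=
    (isCardDirected_aleph0_iff.1 (hP.mono (Fact.out : μ.IsRegular).aleph0_le)).2
  have : ∀ M, HasColimit (p.D.restrictSet (OrderHom.Subtype.val _ M)) :=
    fun M : SmallDirectedSubset μ p.J => (hC M.1 M.2.1).has_colimit _
  have hcover : ∀ j, ∃ M : SmallDirectedSubset μ p.J, j ∈ OrderHom.Subtype.val _ M :=
    fun j => ⟨⟨{j}, (isGreatest_singleton (a := j)).isCardDirected,
      (Set.finite_singleton j).lt_aleph0.trans_le (Fact.out : μ.IsRegular).aleph0_le⟩, rfl⟩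
  exact
    { J := SmallDirectedSubset μ p.J
      directed := hP
      D := restrictedColimit p.D (OrderHom.Subtype.val _)
      mem M := isPresentable_colimit_of_mk_lt (I := ↥(OrderHom.Subtype.val _ M)) M.2.2 _
        fun j => hS _ (p.mem j)
      cocone := restrictedColimitCocone _ p.cocone
      isColimit := isColimitRestrictedColimitCocone _ hcover p.isColimit
      iso := p.iso }

/-- An accessible category with all directed colimits which is `λ`-accessible is `μ`-accessible
for every regular `μ ≥ λ`. -/
theorem stmt14 (C : Type u₂) [Category.{u} C] (lam : Cardinal.{u}) (hlam : lam.IsRegular)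
    (hacc : IsAccessible lam C) (hdir : HasDirectedColimits C)
    (μ : Cardinal.{u}) (hμ : μ.IsRegular) (hle : lam ≤ μ) :
    IsAccessible μ C := by
  have : Fact μ.IsRegular := ⟨hμ⟩
  obtain ⟨S, hS, hpres⟩ := hacc.generators
  refine ⟨fun J _ hJ => hacc.hasColimits J (hJ.mono hle), {A | IsPresentable μ A}, fun _ h => h,
    fun X => ?_⟩
  exact ⟨(hpres X).some.regroup hlam.aleph0_le hdir fun A hA => (hS A hA).mono hle⟩
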